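/- If unique factorization holds in H⁰(ℙ¹, O(•)) ≅ ℂ[s,t] (homogeneous forms), then 4A³ + 27B² = 0 for forms A of degree 4k and B of degree 6k implies there exists a form f of degree 2k with A = -3f² and B = 2f³. -/

import Mathlib

/-!
Over an integrally closed domain, `x³ = y²` gives `x² ∣ y²`, hence `x ∣ y`, and then `x = c²`,
`y = c³`; apply this to `x = -12A`, `y = 108B` and put `f = c / 6`. The square root `c` of the
homogeneous form `-12A` is itself homogeneous: the lowest degree (order as a power series) and the
highest degree (total degree) of a polynomial are both additive on products over a domain, so they
agree for `c` because they agree for `c²`.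
-/

open MvPolynomial

theorem exists_eq_sq_and_eq_pow_three_of_pow_three_eq_sq {R : Type*} [CommRing R] [IsDomain R]
    [IsIntegrallyClosed R] {x y : R} (h : x ^ 3 = y ^ 2) : ∃ c, x = c ^ 2 ∧ y = c ^ 3 := by
  rcases eq_or_ne x 0 with rfl | hx
  · exact ⟨0, by simp, by simpa using (pow_eq_zero_iff two_ne_zero).mp (by simpa using h.symm)⟩
  obtain ⟨c, rfl⟩ : x ∣ y :=
    (IsIntegrallyClosed.pow_dvd_pow_iff two_ne_zero).mp ⟨x, by rw [← h]; ring⟩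
  have hc : x = c ^ 2 := mul_left_cancel₀ (pow_ne_zero 2 hx) (by linear_combination h)
  exact ⟨c, hc, by rw [hc]; ring⟩

namespace MvPolynomial

variable {σ R : Type*} [CommSemiring R] {p q : MvPolynomial σ R}

theorem order_coe_le_totalDegree (hp : p ≠ 0) :
    (p : MvPowerSeries σ R).order ≤ p.totalDegree := by
  obtain ⟨d, hd⟩ := support_nonempty.mpr hp
  calc (p : MvPowerSeries σ R).order ≤ d.degree :=
        MvPowerSeries.order_le (by rwa [coeff_coe, ← mem_support_iff])
    _ ≤ p.totalDegree := by exact_mod_cast le_totalDegree hd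

theorem IsHomogeneous.le_order_coe {n : ℕ} (hp : p.IsHomogeneous n) :
    n ≤ (p : MvPowerSeries σ R).order :=
  MvPowerSeries.nat_le_order fun _ hd => by rw [coeff_coe, hp.coeff_eq_zero hd.ne]

theorem isHomogeneous_totalDegree_of_totalDegree_le_order
    (h : p.totalDegree ≤ (p : MvPowerSeries σ R).order) :
    p.IsHomogeneous p.totalDegree := by
  intro d hd
  have h_order : (p : MvPowerSeries σ R).order ≤ d.degree :=
    MvPowerSeries.order_le (by rwa [coeff_coe])
  have h_total : d.degree ≤ p.totalDegree := le_totalDegree (mem_support_iff.mpr hd)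
  simp only [Pi.one_def, ← Finsupp.degree_eq_weight_one]
  exact le_antisymm h_total (by exact_mod_cast h.trans h_order)

variable [NoZeroDivisors R]

theorem isHomogeneous_totalDegree_of_isHomogeneous_mul {n : ℕ}
    (h : (p * q).IsHomogeneous n) (hpq : p * q ≠ 0) : p.IsHomogeneous p.totalDegree := by
  have hp : p ≠ 0 := left_ne_zero_of_mul hpq
  have hq : q ≠ 0 := right_ne_zero_of_mul hpq
  apply isHomogeneous_totalDegree_of_totalDegree_le_order
  have h_total : p.totalDegree + q.totalDegree = n := by
    rw [← totalDegree_mul_of_isDomain hp hq, h.totalDegree hpq]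
  have h_order : (n : ℕ∞) ≤ (p : MvPowerSeries σ R).order + (q : MvPowerSeries σ R).order := by
    rw [← MvPowerSeries.order_mul, ← coe_mul]; exact h.le_order_coe
  have hp_order := order_coe_le_totalDegree hp
  have hq_order := order_coe_le_totalDegree hq
  lift (p : MvPowerSeries σ R).order to ℕ using ne_top_of_le_ne_top (ENat.natCast_ne_top _) hp_order
    with a
  lift (q : MvPowerSeries σ R).order to ℕ using ne_top_of_le_ne_top (ENat.natCast_ne_top _) hq_order
    with b
  norm_cast at *
  omega

theorem IsHomogeneous.of_pow {n m : ℕ} (h : (p ^ n).IsHomogeneous (n * m)) (hn : n ≠ 0) :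
    p.IsHomogeneous m := by
  rcases eq_or_ne p 0 with rfl | hp
  · exact isHomogeneous_zero _ _ _
  have hpn : p ^ n ≠ 0 := pow_ne_zero n hp
  have hp_hom : p.IsHomogeneous p.totalDegree := by
    rw [← Nat.succ_pred_eq_of_ne_zero hn, pow_succ'] at h hpn
    exact isHomogeneous_totalDegree_of_isHomogeneous_mul h hpn
  have h_deg : p.totalDegree * n = n * m := (hp_hom.pow n).inj_right h hpn
  rw [mul_comm, Nat.mul_left_cancel_iff (Nat.pos_of_ne_zero hn)] at h_deg
  rwa [← h_deg]

end MvPolynomial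

theorem stmt_15_general (k : ℕ) (A B : MvPolynomial (Fin 2) ℂ)
    (hA : A.IsHomogeneous (4 * k))
    (h : 4 * A ^ 3 + 27 * B ^ 2 = 0) :
    ∃ f : MvPolynomial (Fin 2) ℂ,
      f.IsHomogeneous (2 * k) ∧ A = -3 * f ^ 2 ∧ B = 2 * f ^ 3 := by
  obtain ⟨c, hc2, hc3⟩ := exists_eq_sq_and_eq_pow_three_of_pow_three_eq_sq
    (x := C (-12) * A) (y := C 108 * B)
    (by simp only [map_neg, map_ofNat]; linear_combination (-432) * h)
  have hc : c.IsHomogeneous (2 * k) :=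
    IsHomogeneous.of_pow (by rw [← hc2, ← mul_assoc]; exact hA.C_mul _) two_ne_zero
  have h6 : (6 : MvPolynomial (Fin 2) ℂ) * C 6⁻¹ = 1 := by
    rw [← map_ofNat C, ← map_mul]; norm_num
  refine ⟨C 6⁻¹ * c, hc.C_mul _, ?_, ?_⟩
  · simp only [map_neg, map_ofNat] at hc2
    linear_combination (-3 * C 6⁻¹ ^ 2) * hc2 - A * (1 + 6 * C 6⁻¹) * h6
  · simp only [map_ofNat] at hc3
    linear_combination (2 * C 6⁻¹ ^ 3) * hc3 - B * (1 + 6 * C 6⁻¹ + (6 * C 6⁻¹) ^ 2) * h6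

/-- if `A`, `B` are homogeneous forms on ℙ¹ (binary forms over ℂ) of
degrees `4k` and `6k` with `4A³ + 27B² = 0`, then by unique factorization there is a
homogeneous form `f` of degree `2k` with `A = -3f²` and `B = 2f³`. -/
theorem stmt_15 (k : ℕ) (A B : MvPolynomial (Fin 2) ℂ)
    (hA : A.IsHomogeneous (4 * k)) (hB : B.IsHomogeneous (6 * k))
    (h : 4 * A ^ 3 + 27 * B ^ 2 = 0) :
    ∃ f : MvPolynomial (Fin 2) ℂ,
      f.IsHomogeneous (2 * k) ∧ A = -3 * f ^ 2 ∧ B = 2 * f ^ 3 :=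
  stmt_15_general k A B hA h
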